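/- arXiv:2302.01009 — 6 statements merged into one kernel-verified Lean document; each statement's English description precedes it below -/
import Mathlib

section
/- The function f maps V into V: for every tuple v = (a,b,c,d) satisfying conditions I–III, the tuple f(v) also satisfies conditions I–III. -/
/-- Conditions I-III defining the set V of 4-tuples (a,b,c,d). -/
def inV : ℕ × ℕ × ℕ × ℕ → Prop :=
  fun ⟨a, b, c, d⟩ =>
    (∃ k, c = 2 ^ k) ∧ (d = 0 ∨ d = 1) ∧ (a > 0 → b = 0 → c > 1) ∧ (a = 0 → c = 1)

open Classical in
/-- The function f defined by the six rules. -/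
noncomputable def f : ℕ × ℕ × ℕ × ℕ → ℕ × ℕ × ℕ × ℕ :=
  fun ⟨a, b, c, d⟩ =>
    if d = 0 then
      if a > 0 then
        if b > 0 then (a, b - 1, 2 * c, 0)
        else (a - 1, c, 1, 0)
      else (0, b + 1, 1, 1)
    else
      if c > 1 then (a, b + 1, c / 2, 1)
      else if ∃ k > 0, b = 2 ^ k then (a + 1, 0, b, 1)
      else (a, b, 1, 0)

theorem Nat.exists_two_pow_div_two {c : ℕ} (h : ∃ k, c = 2 ^ k) (hc : 1 < c) :
    ∃ k, c / 2 = 2 ^ k := by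
  obtain ⟨k, rfl⟩ := h
  have hk : 1 ≤ k := Nat.one_le_iff_ne_zero.mpr (Nat.one_lt_two_pow_iff.mp hc)
  exact ⟨k - 1, by rw [← Nat.pow_div hk two_pos, pow_one]⟩

theorem stmt_0 : ∀ v : ℕ × ℕ × ℕ × ℕ, inV v → inV (f v) := by
  rintro ⟨a, b, c, d⟩ ⟨⟨k, hk⟩, -, hII, hIII⟩
  have hc_pos : 0 < c := hk ▸ Nat.two_pow_pos k
  simp only [f, inV]
  split_ifs with hd0 ha hb hc hb_pow <;> dsimp only
  · exact ⟨⟨k + 1, by rw [hk, pow_succ']⟩, .inl rfl, by omega, by omega⟩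
  · exact ⟨⟨0, rfl⟩, .inl rfl, by omega, by omega⟩
  · exact ⟨⟨0, rfl⟩, .inr rfl, by omega, by omega⟩
  · exact ⟨Nat.exists_two_pow_div_two ⟨k, hk⟩ hc, .inr rfl, nofun, by omega⟩
  · obtain ⟨j, hj, rfl⟩ := hb_pow
    exact ⟨⟨j, rfl⟩, .inr rfl, fun _ _ => Nat.one_lt_two_pow_iff.mpr hj.ne', nofun⟩
  · exact ⟨⟨0, rfl⟩, .inl rfl, by omega, by omega⟩
end

section
/- The function f : V → V is injective: for all u, v ∈ V, if f(u) = f(v) then u = v. -/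
/-
Each rule is undone by reading off from the image which rule produced it: rules 1, 2, 6 give
d = 0, and among them c > 1 singles out rule 1 while rule 2 is the case where b is a power of
two greater than 1; rules 3, 4, 5 give d = 1, and a = 0 singles out rule 3 (by III) while
b = 0 singles out rule 5. So f has an explicit left inverse on V.
-/

open Classical in
noncomputable def fInv : ℕ × ℕ × ℕ × ℕ → ℕ × ℕ × ℕ × ℕ :=
  fun ⟨a, b, c, d⟩ =>
    if d = 0 then
      if c > 1 then (a, b + 1, c / 2, 0)
      else if ∃ k > 0, b = 2 ^ k then (a + 1, 0, b, 0)
      else (a, b, 1, 1)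
    else
      if a = 0 then (0, b - 1, 1, 0)
      else if b > 0 then (a, b - 1, 2 * c, 1)
      else (a - 1, c, 1, 1)

theorem leftInvOn_fInv_f : Set.LeftInvOn fInv f inV := by
  rintro ⟨a, b, c, d⟩ ⟨⟨k, rfl⟩, rfl | rfl, hb, ha⟩
  · rcases Nat.eq_zero_or_pos a with rfl | ha0
    · simp [f, fInv, ha rfl]
    rcases Nat.eq_zero_or_pos b with rfl | hb0
    · have hk : k ≠ 0 := Nat.one_lt_two_pow_iff.mp (hb ha0 rfl)
      simp [f, fInv, ha0, Nat.pos_of_ne_zero hk, Nat.sub_add_cancel ha0]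
    · have hc : 1 < 2 * 2 ^ k := by have := Nat.one_le_two_pow (n := k); omega
      simp [f, fInv, ha0, hb0, hc, Nat.sub_add_cancel hb0]
  · by_cases hc : 1 < 2 ^ k
    · have ha0 : a ≠ 0 := fun h => hc.ne' (ha h)
      have hk : k ≠ 0 := Nat.one_lt_two_pow_iff.mp hc
      simp [f, fInv, hc, ha0, Nat.two_mul_div_two_of_even (Nat.even_pow.2 ⟨even_two, hk⟩)]
    · have hc1 : 2 ^ k = 1 := by have := Nat.one_le_two_pow (n := k); omega
      by_cases hpow : ∃ j > 0, b = 2 ^ j <;> simp [f, fInv, hpow, hc1]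

theorem stmt_1 : ∀ u v : ℕ × ℕ × ℕ × ℕ, inV u → inV v → f u = f v → u = v :=
  fun _ _ hu hv h => leftInvOn_fInv_f.injOn hu hv h
end

section
/- For every tuple of the form v = (0, 2^m, 1, 1) ∈ V with 2^m not a tower of exponents (i.e., 2^m ∉ {T(h) : h ≥ 0}), there exists an integer n ≥ 0 such that the n-th iterate f^n(v) = (0, 2^{m+1}, 1, 1). -/
/-- The tower function: T 0 = 1, T (h+1) = 2 ^ T h. -/
def T : ℕ → ℕ
  | 0 => 1
  | h + 1 => 2 ^ T h

/-!
Starting from `(a + 1, b, 1, 1)`, the map `f` alternates between two phases. If `b = 2 ^ k`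
with `k > 0`, rules (5) and (4) take a logarithm, giving `(a + 2, k, 1, 1)`. Otherwise rule (6)
switches to `d = 0`, where rules (1) and (2) exponentiate `a + 1` times, reaching
`(0, 2 ^ E, 1, 0)` with `E = (2 ^ ·)^[a] b`; rule (3) and repeated use of rules (6) and (3)
then count up to the next power of two, `2 ^ (E + 1)`. Since the logarithms of the first phase
are undone by the exponentiations of the second, strong induction on `b` shows that
`(a + 1, b, 1, 1)` always reaches `(0, 2 ^ ((2 ^ ·)^[a] b + 1), 1, 1)`. For `v = (0, 2 ^ m, 1, 1)`
one logarithm gives `(1, m, 1, 1)`, and with `a = 0` this yields `(0, 2 ^ (m + 1), 1, 1)`.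
-/

lemma f_rule1 {a b : ℕ} (c : ℕ) (ha : 0 < a) (hb : 0 < b) :
    f (a, b, c, 0) = (a, b - 1, 2 * c, 0) := by
  simp [f, ha, hb]

lemma f_rule2 {a : ℕ} (c : ℕ) (ha : 0 < a) : f (a, 0, c, 0) = (a - 1, c, 1, 0) := by
  simp [f, ha]

lemma f_rule3 (b c : ℕ) : f (0, b, c, 0) = (0, b + 1, 1, 1) := by
  simp [f]

lemma f_rule4 {c : ℕ} (a b : ℕ) (hc : 1 < c) : f (a, b, c, 1) = (a, b + 1, c / 2, 1) := by
  simp [f, hc]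

lemma f_rule5 (a : ℕ) {k : ℕ} (hk : 0 < k) : f (a, 2 ^ k, 1, 1) = (a + 1, 0, 2 ^ k, 1) := by
  simp [f, hk.ne']

lemma f_rule6 (a : ℕ) {b : ℕ} (hb : ¬∃ k > 0, b = 2 ^ k) : f (a, b, 1, 1) = (a, b, 1, 0) := by
  simp [f, hb]

lemma iterate_f_halve (k a b : ℕ) : f^[k] (a, b, 2 ^ k, 1) = (a, b + k, 1, 1) := by
  induction k generalizing b with
  | zero => rfl
  | succ k ih =>
    rw [Function.iterate_succ_apply, f_rule4 a b (Nat.one_lt_two_pow k.succ_ne_zero),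
      pow_succ, Nat.mul_div_cancel _ two_pos, ih, Nat.add_right_comm, Nat.add_assoc]

lemma iterate_f_double {a : ℕ} (ha : 0 < a) (j b c : ℕ) :
    f^[j] (a, b + j, c, 0) = (a, b, 2 ^ j * c, 0) := by
  induction j generalizing c with
  | zero => simp
  | succ j ih =>
    rw [Function.iterate_succ_apply, f_rule1 c ha (by omega), Nat.add_succ_sub_one, ih,
      pow_succ, mul_assoc]

lemma not_exists_eq_two_pow_of_lt_of_lt {e b : ℕ} (h₁ : 2 ^ e < b) (h₂ : b < 2 ^ (e + 1)) :
    ¬∃ k > 0, b = 2 ^ k := by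
  rintro ⟨k, -, rfl⟩
  have := (Nat.pow_lt_pow_iff_right one_lt_two).mp h₁
  have := (Nat.pow_lt_pow_iff_right one_lt_two).mp h₂
  omega

def Reaches (x y : ℕ × ℕ × ℕ × ℕ) : Prop := ∃ n, f^[n] x = y

infix:50 " ⇝ " => Reaches

namespace Reaches

lemma refl (x : ℕ × ℕ × ℕ × ℕ) : x ⇝ x := ⟨0, rfl⟩

lemma single {x y : ℕ × ℕ × ℕ × ℕ} (h : f x = y) : x ⇝ y := ⟨1, h⟩

lemma trans {x y z : ℕ × ℕ × ℕ × ℕ} (hxy : x ⇝ y) (hyz : y ⇝ z) : x ⇝ z := by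
  obtain ⟨n, rfl⟩ := hxy
  obtain ⟨m, rfl⟩ := hyz
  exact ⟨m + n, Function.iterate_add_apply f m n x⟩

instance : Trans Reaches Reaches Reaches := ⟨trans⟩

lemma log (a : ℕ) {k : ℕ} (hk : 0 < k) : (a, 2 ^ k, 1, 1) ⇝ (a + 1, k, 1, 1) :=
  (single (f_rule5 a hk)).trans ⟨k, by simpa using iterate_f_halve k (a + 1) 0⟩

lemma exp (a b : ℕ) : (a + 1, b, 1, 0) ⇝ (a, 2 ^ b, 1, 0) := by
  have hdouble : f^[b] (a + 1, b, 1, 0) = (a + 1, 0, 2 ^ b, 0) := by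
    simpa using iterate_f_double a.succ_pos b 0 1
  exact trans ⟨b, hdouble⟩ (single (f_rule2 _ a.succ_pos))

lemma iterate_exp (a b : ℕ) : (a, b, 1, 0) ⇝ (0, (2 ^ ·)^[a] b, 1, 0) := by
  induction a generalizing b with
  | zero => exact refl _
  | succ a ih => exact (exp a b).trans (ih (2 ^ b))

lemma next_two_pow {e b : ℕ} (d : ℕ) (hb : 2 ^ e < b) (hd : b + d = 2 ^ (e + 1)) :
    (0, b, 1, 1) ⇝ (0, 2 ^ (e + 1), 1, 1) := by
  induction d generalizing b with
  | zero => exact hd ▸ refl _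
  | succ d ih =>
    have hb' : ¬∃ k > 0, b = 2 ^ k := not_exists_eq_two_pow_of_lt_of_lt hb (by omega)
    calc (0, b, 1, 1) ⇝ (0, b, 1, 0) := single (f_rule6 0 hb')
      _ ⇝ (0, b + 1, 1, 1) := single (f_rule3 b 1)
      _ ⇝ (0, 2 ^ (e + 1), 1, 1) := ih (by omega) (by omega)

lemma to_two_pow_iterate_succ (a b : ℕ) :
    (a + 1, b, 1, 1) ⇝ (0, 2 ^ ((2 ^ ·)^[a] b + 1), 1, 1) := by
  induction b using Nat.strong_induction_on generalizing a with
  | _ b ih =>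
    by_cases hb : ∃ k > 0, b = 2 ^ k
    · obtain ⟨k, hk, rfl⟩ := hb
      calc (a + 1, 2 ^ k, 1, 1) ⇝ (a + 2, k, 1, 1) := log (a + 1) hk
        _ ⇝ (0, 2 ^ ((2 ^ ·)^[a + 1] k + 1), 1, 1) := ih k Nat.lt_two_pow_self (a + 1)
    · set E := (2 ^ ·)^[a] b
      have hE : (2 ^ ·)^[a + 1] b = 2 ^ E := Function.iterate_succ_apply' _ a b
      calc (a + 1, b, 1, 1) ⇝ (a + 1, b, 1, 0) := single (f_rule6 _ hb)
        _ ⇝ (0, 2 ^ E, 1, 0) := hE ▸ iterate_exp (a + 1) b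
        _ ⇝ (0, 2 ^ E + 1, 1, 1) := single (f_rule3 _ 1)
        _ ⇝ (0, 2 ^ (E + 1), 1, 1) := next_two_pow (2 ^ E - 1) (by omega)
          (by have := Nat.one_le_two_pow (n := E); rw [pow_succ]; omega)

end Reaches

theorem stmt_3 : ∀ m : ℕ, (∀ h : ℕ, 2 ^ m ≠ T h) →
    ∃ n : ℕ, f^[n] (0, 2 ^ m, 1, 1) = (0, 2 ^ (m + 1), 1, 1) := by
  intro m hm
  have hm0 : 0 < m := Nat.pos_of_ne_zero fun h => hm 0 (by simp [h, T])
  calc (0, 2 ^ m, 1, 1) ⇝ (1, m, 1, 1) := Reaches.log 0 hm0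
    _ ⇝ (0, 2 ^ (m + 1), 1, 1) := Reaches.to_two_pow_iterate_succ 0 m
end

section
/- For every tuple of the form v = (0, 2^m, 1, 1) ∈ V with 2^m ∈ {T(h) : h ≥ 0}, there exists an integer n ≥ 0 such that f^n(v) = (a, 1, 1, 0), where a is the unique natural number with T(a) = 2^m. -/
/-!
While `d = 1`, the state `(j, T (h + 1), 1, 1) = (j, 2 ^ T h, 1, 1)` moves by rule (5) to
`(j + 1, 0, 2 ^ T h, 1)`, and then `T h` applications of rule (4) halve `c` down to `1` while
counting `b` up to `T h`, reaching `(j + 1, T h, 1, 1)`: one level of the tower is peeled off and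
recorded in `a`. After `h` such rounds `b = T 0 = 1`, which is not a power `2 ^ k` with `k > 0`,
so rule (6) ends the phase at `(j + h, 1, 1, 0)`.
-/

lemma f_iterate_halve (a b i : ℕ) : f^[i] (a, b, 2 ^ i, 1) = (a, b + i, 1, 1) := by
  induction i generalizing b with
  | zero => simp
  | succ i ih =>
    have hc : 1 < 2 ^ (i + 1) := Nat.one_lt_two_pow (Nat.succ_ne_zero i)
    have hhalf : 2 ^ (i + 1) / 2 = 2 ^ i := by rw [pow_succ, Nat.mul_div_cancel _ two_pos]
    rw [Function.iterate_succ_apply]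
    simp only [f, one_ne_zero, if_false, if_pos hc, hhalf]
    rw [ih, add_right_comm, add_assoc]

lemma f_two_pow (a k : ℕ) (hk : 0 < k) : f (a, 2 ^ k, 1, 1) = (a + 1, 0, 2 ^ k, 1) := by
  have hb : ∃ k' > 0, 2 ^ k = 2 ^ k' := ⟨k, hk, rfl⟩
  simp only [f, one_ne_zero, if_false, lt_irrefl, if_pos hb]

lemma f_one (a : ℕ) : f (a, 1, 1, 1) = (a, 1, 1, 0) := by
  have hb : ¬∃ k > 0, 1 = 2 ^ k := by
    rintro ⟨k, hk, h⟩
    exact (Nat.one_lt_two_pow hk.ne').ne h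
  simp [f, hb]

lemma T_pos (h : ℕ) : 0 < T h := by
  cases h <;> simp [T]

lemma exists_iterate_f_T (h j : ℕ) : ∃ n, f^[n] (j, T h, 1, 1) = (j + h, 1, 1, 0) := by
  induction h generalizing j with
  | zero => exact ⟨1, f_one j⟩
  | succ h ih =>
    obtain ⟨n, hn⟩ := ih (j + 1)
    refine ⟨n + T h + 1, ?_⟩
    rw [Function.iterate_add_apply, Function.iterate_add_apply, Function.iterate_one, T,
      f_two_pow j (T h) (T_pos h), f_iterate_halve, zero_add, hn, add_right_comm, add_assoc]

theorem stmt_4 : ∀ m a : ℕ, T a = 2 ^ m →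
    ∃ n : ℕ, f^[n] (0, 2 ^ m, 1, 1) = (a, 1, 1, 0) := by
  intro m a hTa
  simpa [hTa] using exists_iterate_f_T a 0
end

section
/- For every v = (a,b,c,d) ∈ V there exist natural numbers m and n such that f^n(v) = (0, 2^m, 1, 1). -/
def ReachesPowTwo (v : ℕ × ℕ × ℕ × ℕ) : Prop :=
  ∃ m n : ℕ, f^[n] v = (0, 2 ^ m, 1, 1)

lemma ReachesPowTwo.of_iterate {v : ℕ × ℕ × ℕ × ℕ} (k : ℕ) (h : ReachesPowTwo (f^[k] v)) :
    ReachesPowTwo v := by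
  obtain ⟨m, n, hn⟩ := h
  exact ⟨m, n + k, by rwa [Function.iterate_add_apply]⟩

lemma ReachesPowTwo.of_apply {v : ℕ × ℕ × ℕ × ℕ} (h : ReachesPowTwo (f v)) :
    ReachesPowTwo v :=
  .of_iterate 1 h

section Steps

variable (a b c : ℕ)

lemma f_succ_succ_zero : f (a + 1, b + 1, c, 0) = (a + 1, b, 2 * c, 0) := by
  simp [f]

lemma f_succ_zero_zero : f (a + 1, 0, c, 0) = (a, c, 1, 0) := by
  simp [f]

lemma f_zero_of_d_zero : f (0, b, c, 0) = (0, b + 1, 1, 1) := by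
  simp [f]

lemma f_two_pow_succ (e : ℕ) : f (a, b, 2 ^ (e + 1), 1) = (a, b + 1, 2 ^ e, 1) := by
  have hgt : 2 ^ e * 2 > 1 := by have := Nat.one_le_two_pow (n := e); omega
  simp [f, pow_succ, hgt]

lemma f_of_eq_two_pow {k : ℕ} (hk : 0 < k) : f (a, 2 ^ k, 1, 1) = (a + 1, 0, 2 ^ k, 1) := by
  simp [f, hk.ne']

lemma f_of_ne_two_pow (h : ¬ ∃ k > 0, b = 2 ^ k) : f (a, b, 1, 1) = (a, b, 1, 0) := by
  simp [f, h]

lemma iterate_f_shift_b_to_c : f^[b] (a + 1, b, c, 0) = (a + 1, 0, 2 ^ b * c, 0) := by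
  induction b generalizing c with
  | zero => simp
  | succ b ih =>
    rw [Function.iterate_succ_apply, f_succ_succ_zero, ih, pow_succ, mul_assoc]

lemma iterate_f_shift_c_to_b (e : ℕ) : f^[e] (a, b, 2 ^ e, 1) = (a, b + e, 1, 1) := by
  induction e generalizing b with
  | zero => simp
  | succ e ih =>
    rw [Function.iterate_succ_apply, f_two_pow_succ, ih, add_right_comm, add_assoc]

end Steps

lemma reachesPowTwo_zero_of_add_eq_two_pow (j : ℕ) :
    ∀ b, (∃ m, b + j = 2 ^ m) → ReachesPowTwo (0, b, 1, 1) := by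
  induction j with
  | zero =>
    rintro b ⟨m, he⟩
    exact ⟨m, 0, by simp [← he]⟩
  | succ j ih =>
    rintro b ⟨m, he⟩
    by_cases hb : ∃ k > 0, b = 2 ^ k
    · obtain ⟨k, -, rfl⟩ := hb
      exact ⟨k, 0, rfl⟩
    · refine .of_apply (.of_apply ?_)
      rw [f_of_ne_two_pow _ _ hb, f_zero_of_d_zero]
      exact ih (b + 1) ⟨m, by omega⟩

lemma reachesPowTwo_zero (b : ℕ) : ReachesPowTwo (0, b, 1, 1) :=
  reachesPowTwo_zero_of_add_eq_two_pow (2 ^ b - b) b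
    ⟨b, Nat.add_sub_cancel' Nat.lt_two_pow_self.le⟩

lemma reachesPowTwo_of_d_zero (a b c : ℕ) : ReachesPowTwo (a, b, c, 0) := by
  induction a generalizing b c with
  | zero =>
    refine .of_apply ?_
    rw [f_zero_of_d_zero]
    exact reachesPowTwo_zero _
  | succ a ih =>
    refine .of_iterate b (.of_apply ?_)
    rw [iterate_f_shift_b_to_c, f_succ_zero_zero]
    exact ih _ _

lemma reachesPowTwo_of_c_one (a b : ℕ) : ReachesPowTwo (a, b, 1, 1) := by
  induction b using Nat.strong_induction_on generalizing a with
  | _ b ih =>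
    by_cases hb : ∃ k > 0, b = 2 ^ k
    · obtain ⟨k, hk, rfl⟩ := hb
      refine .of_apply (.of_iterate k ?_)
      rw [f_of_eq_two_pow _ hk, iterate_f_shift_c_to_b, zero_add]
      exact ih k Nat.lt_two_pow_self _
    · refine .of_apply ?_
      rw [f_of_ne_two_pow _ _ hb]
      exact reachesPowTwo_of_d_zero _ _ _

theorem stmt_6 : ∀ v : ℕ × ℕ × ℕ × ℕ, inV v →
    ∃ m n : ℕ, f^[n] v = (0, 2 ^ m, 1, 1) := by
  rintro ⟨a, b, c, d⟩ ⟨⟨e, rfl⟩, hd | hd, -, -⟩ <;> subst hd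
  · exact reachesPowTwo_of_d_zero a b (2 ^ e)
  · refine ReachesPowTwo.of_iterate e ?_
    rw [iterate_f_shift_c_to_b]
    exact reachesPowTwo_of_c_one a (b + e)
end

section
/- For every m ≥ 1, any trajectory of f from (m,1,1,0) to (m+1,1,1,0) takes at least T(m-1) steps: if f^ℓ(m,1,1,0) = (m+1,1,1,0) for ℓ > 0, then ℓ ≥ T(m-1). -/
lemma iterate_f_of_le {a b i : ℕ} (c : ℕ) (ha : 0 < a) (hi : i ≤ b) :
    f^[i] (a, b, c, 0) = (a, b - i, 2 ^ i * c, 0) := by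
  induction i with
  | zero => simp
  | succ i ih =>
    rw [Function.iterate_succ_apply', ih (by omega), f_rule1 _ ha (by omega), pow_succ']
    simp only [Nat.sub_sub, mul_assoc]

lemma iterate_f_succ {a : ℕ} (b c : ℕ) (ha : 0 < a) :
    f^[b + 1] (a, b, c, 0) = (a - 1, 2 ^ b * c, 1, 0) := by
  rw [Function.iterate_succ_apply', iterate_f_of_le c ha le_rfl, Nat.sub_self, f_rule2 _ ha]

lemma fst_iterate_f_le {a b i : ℕ} (c : ℕ) (ha : 0 < a) (hi : i ≤ b + 1) :
    (f^[i] (a, b, c, 0)).1 ≤ a := by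
  rcases hi.lt_or_eq with hi | rfl
  · rw [iterate_f_of_le c ha (by omega)]
  · rw [iterate_f_succ b c ha]
    exact Nat.sub_le a 1

def stageTime : ℕ → ℕ
  | 0 => 0
  | k + 1 => stageTime k + (T k + 1)

lemma iterate_f_stageTime {m k : ℕ} (hk : k ≤ m) :
    f^[stageTime k] (m, 1, 1, 0) = (m - k, T k, 1, 0) := by
  induction k with
  | zero => rfl
  | succ k ih =>
    rw [stageTime, add_comm, Function.iterate_add_apply, ih (by omega),
      iterate_f_succ _ _ (by omega), Nat.sub_sub, mul_one, T]

lemma fst_iterate_f_le_of_le_stageTime {m k j : ℕ} (hk : k ≤ m) (hj : j ≤ stageTime k) :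
    (f^[j] (m, 1, 1, 0)).1 ≤ m := by
  induction k generalizing j with
  | zero =>
    rw [Nat.le_zero.mp hj]
    exact le_rfl
  | succ k ih =>
    by_cases hjk : j ≤ stageTime k
    · exact ih (by omega) hjk
    obtain ⟨i, rfl⟩ : ∃ i, j = i + stageTime k := ⟨j - stageTime k, by omega⟩
    rw [Function.iterate_add_apply, iterate_f_stageTime (by omega)]
    exact (fst_iterate_f_le 1 (by omega) (by rw [stageTime] at hj; omega)).trans (Nat.sub_le m k)

theorem stmt_9 : ∀ m : ℕ, 1 ≤ m → ∀ ℓ : ℕ, 0 < ℓ →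
    f^[ℓ] (m, 1, 1, 0) = (m + 1, 1, 1, 0) → T (m - 1) ≤ ℓ := by
  intro m hm ℓ _ hℓ
  obtain ⟨n, rfl⟩ : ∃ n, m = n + 1 := ⟨m - 1, by omega⟩
  rw [Nat.add_sub_cancel]
  by_contra! hlt
  have hle : ℓ ≤ stageTime (n + 1) := by
    rw [stageTime]
    omega
  have hfst := fst_iterate_f_le_of_le_stageTime le_rfl hle
  rw [hℓ] at hfst
  omega
end
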